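/- arXiv:1601.07136 — 6 statements merged into one kernel-verified Lean document; each statement's English description precedes it below -/
import Mathlib

section
/- Let (A, m∩A) be a quasi-local subring of a complete local (Noetherian) ring (T, m) such that the natural map A → T/m² is surjective and aT ∩ A = a for every finitely generated ideal a of A. Then A is Noetherian and the natural homomorphism from the m∩A-adic completion of A to T is an isomorphism. -/
/-!
Since `b ↦ b ∩ A` is a left inverse of `a ↦ aT` on finitely generated ideals, ascending chains of
finitely generated ideals of `A` embed into those of the Noetherian ring `T`, so `A` is Noetherian.
Writing `J = m ∩ A`, surjectivity of `A → T/m²` and Nakayama give `JT = m`; then `A → T/m` being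
onto propagates to `A → T/mⁿ` for all `n`, while `mⁿ ∩ A = JⁿT ∩ A = Jⁿ`. Hence
`A/Jⁿ ≅ T/mⁿ` compatibly in `n`, and passing to the limit identifies the `J`-adic completion of
`A` with the `m`-adically complete ring `T`.
-/

open IsLocalRing Ideal

theorem AdicCompletion.factorPow_comp_evalₐ {R : Type*} [CommRing R] (J : Ideal R) {m n : ℕ}
    (hmn : m ≤ n) :
    (Ideal.Quotient.factorPow J hmn).comp (evalₐ J n : AdicCompletion J R →+* R ⧸ J ^ n) =
      evalₐ J m := by
  ext x
  obtain ⟨s, rfl⟩ := mk_surjective J R x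
  simpa using AdicCompletion.Ideal.mk_eq_mk J hmn s

section

variable {A T : Type*} [CommRing A] [CommRing T]

theorem isNoetherianRing_of_comap_map_eq [IsNoetherianRing T] (f : A →+* T)
    (h : ∀ a : Ideal A, a.FG → (a.map f).comap f = a) : IsNoetherianRing A := by
  rw [IsNoetherianRing, isNoetherian_iff_fg_wellFounded]
  refine StrictMono.wellFoundedGT (f := fun a : {a : Ideal A // a.FG} ↦ a.1.map f)
    fun a b hab ↦ (map_mono hab.le).lt_of_ne fun he ↦ hab.ne ?_
  ext1
  rw [← h a a.2, ← h b b.2]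
  exact congrArg (comap f) he

theorem map_comap_eq_of_surjective_mk_sq_comp {f : A →+* T} {I : Ideal T} (hI : I.FG)
    (hIjac : I ≤ jacobson ⊥) (hsurj : Function.Surjective ((Ideal.Quotient.mk (I ^ 2)).comp f)) :
    (I.comap f).map f = I := by
  refine le_antisymm map_comap_le (Submodule.le_of_le_smul_of_le_jacobson_bot hI hIjac ?_)
  intro x hx
  obtain ⟨a, ha⟩ := hsurj (Ideal.Quotient.mk _ x)
  have hxa : x - f a ∈ I ^ 2 := Ideal.Quotient.eq.mp ha.symm
  have hfa : f a ∈ I := by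
    simpa using I.sub_mem hx (pow_le_self two_ne_zero hxa)
  refine Submodule.mem_sup.mpr ⟨f a, mem_map_of_mem f hfa, x - f a, ?_, add_sub_cancel _ _⟩
  rwa [smul_eq_mul, ← sq]

theorem exists_sub_mem_mul_map {f : A →+* T} {I : Ideal T}
    (hsurj : Function.Surjective ((Ideal.Quotient.mk I).comp f)) (K : Ideal A) {x : T}
    (hx : x ∈ K.map f) : ∃ k ∈ K, x - f k ∈ I * K.map f := by
  induction hx using Submodule.span_induction with
  | mem x hx =>
    obtain ⟨k, hk, rfl⟩ := hx
    exact ⟨k, hk, by simp⟩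
  | zero => exact ⟨0, K.zero_mem, by simp⟩
  | add x y _ _ hx hy =>
    obtain ⟨k, hk, hxk⟩ := hx
    obtain ⟨l, hl, hyl⟩ := hy
    refine ⟨k + l, K.add_mem hk hl, ?_⟩
    convert add_mem hxk hyl using 1
    rw [map_add]; ring
  | smul c x _ hx =>
    obtain ⟨k, hk, hxk⟩ := hx
    obtain ⟨b, hb⟩ := hsurj (Ideal.Quotient.mk I c)
    have hcb : c - f b ∈ I := Ideal.Quotient.eq.mp hb.symm
    refine ⟨b * k, K.mul_mem_left b hk, ?_⟩
    -- `c x - f (b k) = c (x - f k) + (c - f b) f k`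
    have h := add_mem (mul_mem_left _ c hxk) (mul_mem_mul hcb (mem_map_of_mem f hk))
    convert h using 1
    rw [smul_eq_mul, map_mul]; ring

theorem surjective_mk_pow_comp {f : A →+* T} {I : Ideal T} (hI : (I.comap f).map f = I)
    (hsurj : Function.Surjective ((Ideal.Quotient.mk I).comp f)) (n : ℕ) :
    Function.Surjective ((Ideal.Quotient.mk (I ^ n)).comp f) := by
  induction n with
  | zero =>
    rintro ⟨t⟩
    exact ⟨0, Ideal.Quotient.eq.mpr (by simp)⟩
  | succ n ih =>
    rintro ⟨t⟩
    obtain ⟨a, ha⟩ := ih (Ideal.Quotient.mk _ t)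
    have hta : t - f a ∈ ((I.comap f) ^ n).map f := by
      rw [Ideal.map_pow, hI]; exact Ideal.Quotient.eq.mp ha.symm
    obtain ⟨k, -, hk⟩ := exists_sub_mem_mul_map hsurj _ hta
    refine ⟨a + k, (Ideal.Quotient.eq.mpr ?_).symm⟩
    rw [Ideal.map_pow, hI, ← pow_succ'] at hk
    simpa [sub_sub] using hk

section QuotientPow

variable {f : A →+* T} {J : Ideal A} {I : Ideal T}
  (hker : ∀ n, (I ^ n).comap f = J ^ n)
  (hsurj : ∀ n, Function.Surjective ((Ideal.Quotient.mk (I ^ n)).comp f))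

noncomputable def quotientPowEquiv (n : ℕ) : A ⧸ J ^ n ≃+* T ⧸ I ^ n :=
  RingEquiv.ofBijective (quotientMap (I ^ n) f (hker n).ge)
    ⟨quotientMap_injective' (hker n).le, .of_comp (g := Ideal.Quotient.mk _) <| by
      rw [← RingHom.coe_comp, quotientMap_comp_mk]; exact hsurj n⟩

theorem quotientPowEquiv_mk (n : ℕ) (a : A) :
    quotientPowEquiv hker hsurj n (Ideal.Quotient.mk _ a) = Ideal.Quotient.mk _ (f a) :=
  rfl

theorem factorPow_comp_quotientPowEquiv {m n : ℕ} (hmn : m ≤ n) :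
    (Ideal.Quotient.factorPow I hmn).comp (quotientPowEquiv hker hsurj n : A ⧸ J ^ n →+* T ⧸ I ^ n) =
      (quotientPowEquiv hker hsurj m : A ⧸ J ^ m →+* T ⧸ I ^ m).comp
        (Ideal.Quotient.factorPow J hmn) :=
  Ideal.Quotient.ringHom_ext (RingHom.ext fun _ ↦ rfl)

theorem factorPow_comp_quotientPowEquiv_comp_evalₐ {m n : ℕ} (hmn : m ≤ n) :
    (Ideal.Quotient.factorPow I hmn).comp
        ((quotientPowEquiv hker hsurj n : A ⧸ J ^ n →+* T ⧸ I ^ n).comp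
          (AdicCompletion.evalₐ J n : AdicCompletion J A →+* A ⧸ J ^ n)) =
      (quotientPowEquiv hker hsurj m : A ⧸ J ^ m →+* T ⧸ I ^ m).comp
        (AdicCompletion.evalₐ J m : AdicCompletion J A →+* A ⧸ J ^ m) := by
  rw [← RingHom.comp_assoc, factorPow_comp_quotientPowEquiv, RingHom.comp_assoc,
    AdicCompletion.factorPow_comp_evalₐ]

theorem factorPow_comp_quotientPowEquiv_symm_comp_mk {m n : ℕ} (hmn : m ≤ n) :
    (Ideal.Quotient.factorPow J hmn).comp
        (((quotientPowEquiv hker hsurj n).symm : T ⧸ I ^ n →+* A ⧸ J ^ n).comp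
          (Ideal.Quotient.mk (I ^ n))) =
      ((quotientPowEquiv hker hsurj m).symm : T ⧸ I ^ m →+* A ⧸ J ^ m).comp
        (Ideal.Quotient.mk (I ^ m)) := by
  ext t
  apply (quotientPowEquiv hker hsurj m).injective
  simpa using congr($(factorPow_comp_quotientPowEquiv hker hsurj hmn)
    ((quotientPowEquiv hker hsurj n).symm (Ideal.Quotient.mk _ t))).symm

variable [IsAdicComplete I T]

noncomputable def adicCompletionRingEquiv : AdicCompletion J A ≃+* T :=
  RingEquiv.ofRingHom
    (IsAdicComplete.liftRingHom I _ (factorPow_comp_quotientPowEquiv_comp_evalₐ hker hsurj))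
    (AdicCompletion.liftRingHom J _ (factorPow_comp_quotientPowEquiv_symm_comp_mk hker hsurj))
    (RingHom.ext <| congrFun <| IsHausdorff.funext' I fun n t ↦ by simp)
    (RingHom.ext fun x ↦ AdicCompletion.ext_evalₐ fun n ↦ by simp)

theorem adicCompletionRingEquiv_algebraMap (a : A) :
    adicCompletionRingEquiv hker hsurj (algebraMap A (AdicCompletion J A) a) = f a :=
  congrFun (IsHausdorff.funext' I (f := adicCompletionRingEquiv hker hsurj ∘ algebraMap A _)
    fun n a ↦ by simp [adicCompletionRingEquiv, AdicCompletion.algebraMap_apply,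
      quotientPowEquiv_mk]) a

end QuotientPow

end

theorem noetherian_and_completion_eq_general {T : Type*} [CommRing T] [IsLocalRing T]
    [IsNoetherianRing T] [IsAdicComplete (maximalIdeal T) T]
    (A : Subring T)
    (honto : Function.Surjective
      (fun a : A => Ideal.Quotient.mk ((maximalIdeal T) ^ 2) (a : T)))
    (hclosed : ∀ a : Ideal A, a.FG → Ideal.comap A.subtype (Ideal.map A.subtype a) = a) :
    IsNoetherianRing A ∧
    ∃ e : AdicCompletion (Ideal.comap A.subtype (maximalIdeal T)) A ≃+* T,
      ∀ a : A,
        e (algebraMap A (AdicCompletion (Ideal.comap A.subtype (maximalIdeal T)) A) a)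
          = (a : T) := by
  have hnoeth : IsNoetherianRing A := isNoetherianRing_of_comap_map_eq A.subtype hclosed
  have hmap : ((maximalIdeal T).comap A.subtype).map A.subtype = maximalIdeal T :=
    map_comap_eq_of_surjective_mk_sq_comp (IsNoetherian.noetherian _)
      (maximalIdeal_le_jacobson ⊥) honto
  have hsurj (n : ℕ) :
      Function.Surjective ((Ideal.Quotient.mk (maximalIdeal T ^ n)).comp A.subtype) :=
    surjective_mk_pow_comp hmap
      ((Ideal.Quotient.factor_surjective (pow_le_self two_ne_zero)).comp honto) n
  have hker (n : ℕ) : (maximalIdeal T ^ n).comap A.subtype =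
      ((maximalIdeal T).comap A.subtype) ^ n := by
    conv_lhs => rw [← hmap, ← Ideal.map_pow]
    exact hclosed _ (IsNoetherian.noetherian _)
  exact ⟨hnoeth, adicCompletionRingEquiv hker hsurj, adicCompletionRingEquiv_algebraMap hker hsurj⟩

/-- **Heitmann, Proposition 1.** If `(A, m ∩ A)` is a quasi-local subring of a complete
local (Noetherian) ring `(T, m)` (i.e. the units of `A` are exactly the elements of `A`
lying outside `m`), the natural map `A → T/m²` is onto, and `aT ∩ A = a` for every
finitely generated ideal `a` of `A`, then `A` is Noetherian and the natural homomorphism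
from the `(m ∩ A)`-adic completion of `A` to `T` is an isomorphism. -/
theorem noetherian_and_completion_eq {T : Type*} [CommRing T] [IsLocalRing T]
    [IsNoetherianRing T] [IsAdicComplete (maximalIdeal T) T]
    (A : Subring T)
    (hql : ∀ x : A, IsUnit x ↔ (x : T) ∉ maximalIdeal T)
    (honto : Function.Surjective
      (fun a : A => Ideal.Quotient.mk ((maximalIdeal T) ^ 2) (a : T)))
    (hclosed : ∀ a : Ideal A, a.FG → Ideal.comap A.subtype (Ideal.map A.subtype a) = a) :
    IsNoetherianRing A ∧
    ∃ e : AdicCompletion (Ideal.comap A.subtype (maximalIdeal T)) A ≃+* T,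
      ∀ a : A,
        e (algebraMap A (AdicCompletion (Ideal.comap A.subtype (maximalIdeal T)) A) a)
          = (a : T) :=
  noetherian_and_completion_eq_general A honto hclosed
end

section
/- Let (T, m) be a complete local (Noetherian) ring of Krull dimension at least one, and let p be a nonmaximal prime ideal of T. Then the cardinality of T/p equals the cardinality of T, and this cardinality is at least 2^{ℵ₀}. -/
/-!
Upper bound: an `I`-adically separated Noetherian ring embeds into `∏ n, R ⧸ I ^ n`, and each
`R ⧸ I ^ n` is an iterated extension of finite `R ⧸ I`-modules, so `#T ≤ max #k ℵ₀ ^ ℵ₀ = #k ^ ℵ₀`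
for the residue field `k`. Lower bound: choose `t ∈ m \ p` and representatives `s` of `k` in `T`.
Then `a ↦ ∑ s (a i) * t ^ i mod p` is injective on `ℕ → k`: if `a` and `b` first differ at `n`,
the difference of the two series is `t ^ n` times a series with constant term
`s (a n) - s (b n) ∉ m`, while `t ∉ p` and `p` is prime.
-/

open IsLocalRing Cardinal

universe u

theorem Module.Finite.cardinalMk_le_max (A M : Type u) [Semiring A] [AddCommMonoid M]
    [Module A M] [Module.Finite A M] : #M ≤ max #A ℵ₀ := by
  obtain ⟨d, f, hf⟩ := Module.Finite.exists_fin' A M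
  calc #M ≤ #(Fin d → A) := mk_le_of_surjective hf
    _ = #A ^ (d : Cardinal) := by simp
    _ ≤ max #A ℵ₀ := power_nat_le_max

theorem Cardinal.max_aleph0_power_aleph0 {κ : Cardinal} (h : 2 ≤ κ) :
    max κ ℵ₀ ^ ℵ₀ = κ ^ ℵ₀ := by
  refine le_antisymm ?_ (power_le_power_right (le_max_left _ _))
  have hmax : max κ ℵ₀ ≤ κ ^ ℵ₀ :=
    max_le (self_le_power _ one_le_aleph0)
      ((cantor ℵ₀).le.trans (power_le_power_right h))
  calc max κ ℵ₀ ^ ℵ₀ ≤ (κ ^ ℵ₀) ^ ℵ₀ := power_le_power_right hmax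
    _ = κ ^ ℵ₀ := by rw [← power_mul, aleph0_mul_aleph0]

section Noetherian

variable {R : Type u} [CommRing R] [IsNoetherianRing R] (I : Ideal R)

theorem cardinalMk_le_max_of_pow_smul_top_eq_bot (n : ℕ) (M : Type u)
    [AddCommGroup M] [Module R M] [Module.Finite R M] (h : I ^ n • (⊤ : Submodule R M) = ⊥) :
    #M ≤ max #(R ⧸ I) ℵ₀ := by
  induction n generalizing M with
  | zero =>
    have : Subsingleton M := by
      rw [pow_zero, Ideal.one_eq_top, Submodule.top_smul] at h
      exact (Submodule.subsingleton_iff R).mp (subsingleton_iff_bot_eq_top.mp h.symm)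
    exact (le_one_iff_subsingleton.mpr this).trans (one_le_aleph0.trans (le_max_right _ _))
  | succ n ih =>
    set N := I • (⊤ : Submodule R M)
    have hN : I ^ n • (⊤ : Submodule R N) = ⊥ := by
      apply Submodule.map_injective_of_injective N.injective_subtype
      rw [Submodule.map_smul'', Submodule.map_bot, Submodule.map_subtype_top, ← Submodule.mul_smul,
        ← pow_succ, h]
    calc #M = #((M ⧸ N) × N) := mk_congr AddSubgroup.addGroupEquivQuotientProdAddSubgroup
      _ = #(M ⧸ N) * #N := by simp
      _ ≤ max #(R ⧸ I) ℵ₀ * max #(R ⧸ I) ℵ₀ :=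
        mul_le_mul' (Module.Finite.cardinalMk_le_max _ _) (ih N hN)
      _ = max #(R ⧸ I) ℵ₀ := mul_eq_self (le_max_right _ _)

theorem cardinalMk_quotient_pow_le (n : ℕ) :
    #(R ⧸ I ^ n) ≤ max #(R ⧸ I) ℵ₀ := by
  refine cardinalMk_le_max_of_pow_smul_top_eq_bot I n _ (Submodule.le_annihilator_iff.mp ?_)
  rw [Submodule.annihilator_top, Ideal.annihilator_quotient]

theorem cardinalMk_le_of_isHausdorff [IsHausdorff I R] :
    #R ≤ max #(R ⧸ I) ℵ₀ ^ ℵ₀ := by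
  have hinj : Function.Injective fun (x : R) (n : ℕ) => Ideal.Quotient.mk (I ^ n) x := by
    intro x y hxy
    rw [IsHausdorff.eq_iff_smodEq (I := I)]
    intro n
    rw [smul_eq_mul, Ideal.mul_top, SModEq.sub_mem]
    exact Ideal.Quotient.eq.mp (congrFun hxy n)
  calc #R ≤ #(∀ n : ℕ, R ⧸ I ^ n) := mk_le_of_injective hinj
    _ = prod fun n => #(R ⧸ I ^ n) := mk_pi _
    _ ≤ prod fun _ => max #(R ⧸ I) ℵ₀ := prod_le_prod _ _ (cardinalMk_quotient_pow_le I)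
    _ = max #(R ⧸ I) ℵ₀ ^ ℵ₀ := by simp

end Noetherian

section AdicSeries

variable {R : Type*} [CommRing R] {I : Ideal R} {t : R}

theorem exists_sub_sum_range_mul_pow_mem [IsPrecomplete I R] (ht : t ∈ I) (c : ℕ → R) :
    ∃ L, ∀ N, L - ∑ i ∈ Finset.range N, c i * t ^ i ∈ I ^ N := by
  have hcauchy : ∀ {m n : ℕ}, m ≤ n → ∑ i ∈ Finset.range m, c i * t ^ i ≡
      ∑ i ∈ Finset.range n, c i * t ^ i [SMOD (I ^ m • ⊤ : Submodule R R)] := by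
    intro m n hmn
    rw [smul_eq_mul, Ideal.mul_top, SModEq.sub_mem, ← neg_sub, ← Finset.sum_Ico_eq_sub _ hmn,
      neg_mem_iff]
    exact Submodule.sum_mem _ fun i hi => Ideal.mul_mem_left _ _
      (Ideal.pow_le_pow_right (Finset.mem_Ico.mp hi).1 (Ideal.pow_mem_pow ht i))
  obtain ⟨L, hL⟩ := IsPrecomplete.prec inferInstance hcauchy
  refine ⟨L, fun N => ?_⟩
  have hN := hL N
  rw [smul_eq_mul, Ideal.mul_top, SModEq.sub_mem] at hN
  rw [← neg_sub]
  exact neg_mem hN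

/-- The `I`-adic limit of the partial sums of `∑ c i * t ^ i`. -/
noncomputable def adicSeriesSum [IsPrecomplete I R] (ht : t ∈ I) (c : ℕ → R) : R :=
  (exists_sub_sum_range_mul_pow_mem ht c).choose

theorem adicSeriesSum_sub_sum_range_mem [IsPrecomplete I R] (ht : t ∈ I) (c : ℕ → R) (N : ℕ) :
    adicSeriesSum ht c - ∑ i ∈ Finset.range N, c i * t ^ i ∈ I ^ N :=
  (exists_sub_sum_range_mul_pow_mem ht c).choose_spec N

theorem adicSeriesSum_sub_mem [IsPrecomplete I R] (ht : t ∈ I) (c : ℕ → R) :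
    adicSeriesSum ht c - c 0 ∈ I := by
  simpa using adicSeriesSum_sub_sum_range_mem ht c 1

variable [IsAdicComplete I R]

theorem eq_adicSeriesSum_of_forall_sub_mem (ht : t ∈ I) {c : ℕ → R} {L : R}
    (hL : ∀ N, L - ∑ i ∈ Finset.range N, c i * t ^ i ∈ I ^ N) : L = adicSeriesSum ht c := by
  refine (IsHausdorff.eq_iff_smodEq (I := I)).mpr fun N => ?_
  rw [smul_eq_mul, Ideal.mul_top, SModEq.sub_mem, ← sub_sub_sub_cancel_right _ _
    (∑ i ∈ Finset.range N, c i * t ^ i)]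
  exact sub_mem (hL N) (adicSeriesSum_sub_sum_range_mem ht c N)

theorem adicSeriesSum_eq_add_mul (ht : t ∈ I) (c : ℕ → R) :
    adicSeriesSum ht c = c 0 + t * adicSeriesSum ht (fun i => c (i + 1)) := by
  refine (eq_adicSeriesSum_of_forall_sub_mem ht fun N => ?_).symm
  cases N with
  | zero => simp
  | succ N =>
    have hsum : ∑ i ∈ Finset.range (N + 1), c i * t ^ i =
        c 0 + t * ∑ i ∈ Finset.range N, c (i + 1) * t ^ i := by
      rw [Finset.sum_range_succ', Finset.mul_sum, add_comm]
      simp only [pow_succ, pow_zero, mul_one]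
      exact congrArg (c 0 + ·) (Finset.sum_congr rfl fun i _ => by ring)
    rw [hsum, add_sub_add_left_eq_sub, ← mul_sub, pow_succ']
    exact Ideal.mul_mem_mul ht (adicSeriesSum_sub_sum_range_mem ht _ N)

theorem adicSeriesSum_sub_adicSeriesSum (ht : t ∈ I) {c c' : ℕ → R} (n : ℕ)
    (h : ∀ i < n, c i = c' i) :
    adicSeriesSum ht c - adicSeriesSum ht c' =
      t ^ n * (adicSeriesSum ht (fun i => c (i + n)) - adicSeriesSum ht (fun i => c' (i + n))) := by
  induction n generalizing c c' with
  | zero => simp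
  | succ n ih =>
    calc adicSeriesSum ht c - adicSeriesSum ht c'
        = t * (adicSeriesSum ht (fun i => c (i + 1)) - adicSeriesSum ht (fun i => c' (i + 1))) := by
          rw [adicSeriesSum_eq_add_mul ht c, adicSeriesSum_eq_add_mul ht c', h 0 n.succ_pos]
          ring
      _ = t ^ (n + 1) * (adicSeriesSum ht (fun i => c (i + (n + 1))) -
          adicSeriesSum ht (fun i => c' (i + (n + 1)))) := by
          rw [ih fun i hi => h (i + 1) (by omega), pow_succ', mul_assoc]
          rfl

theorem injective_mk_adicSeriesSum {p : Ideal R} [hp : p.IsPrime] (hpI : p ≤ I) (ht : t ∈ I)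
    (htp : t ∉ p) {s : R ⧸ I → R} (hs : ∀ x, Ideal.Quotient.mk I (s x) = x) :
    Function.Injective fun a : ℕ → R ⧸ I => Ideal.Quotient.mk p (adicSeriesSum ht (s ∘ a)) := by
  intro a b hab
  have hdiff : adicSeriesSum ht (s ∘ a) - adicSeriesSum ht (s ∘ b) ∈ p := Ideal.Quotient.eq.mp hab
  funext n
  induction n using Nat.strong_induction_on with
  | _ n ih =>
    rw [adicSeriesSum_sub_adicSeriesSum ht (c := s ∘ a) (c' := s ∘ b) n
      fun i hi => congrArg s (ih i hi)] at hdiff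
    have htail := hpI <| (hp.mem_or_mem hdiff).resolve_left fun h => htp (hp.mem_of_pow_mem n h)
    have hhead : s (a n) - s (b n) ∈ I := by
      convert sub_mem (add_mem htail (adicSeriesSum_sub_mem ht fun i => (s ∘ b) (i + n)))
        (adicSeriesSum_sub_mem ht fun i => (s ∘ a) (i + n)) using 1
      simp only [Function.comp_apply, zero_add]
      ring
    rw [← hs (a n), ← hs (b n), Ideal.Quotient.eq]
    exact hhead

end AdicSeries

theorem cardinalMk_nat_arrow_le_quotient {R : Type u} [CommRing R] {I p : Ideal R}
    [IsAdicComplete I R] [p.IsPrime] (hpI : p < I) : #(ℕ → R ⧸ I) ≤ #(R ⧸ p) := by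
  obtain ⟨t, htI, htp⟩ := SetLike.exists_of_lt hpI
  exact mk_le_of_injective <| injective_mk_adicSeriesSum hpI.le htI htp
    (Function.surjInv_eq Ideal.Quotient.mk_surjective)

theorem card_quotient_eq_card_general {T : Type*} [CommRing T] [IsLocalRing T]
    [IsNoetherianRing T] [IsAdicComplete (maximalIdeal T) T]
    (p : Ideal T) (hp : p.IsPrime) (hpmax : ¬ p.IsMaximal) :
    #(T ⧸ p) = #T ∧ (2 : Cardinal) ^ Cardinal.aleph0 ≤ #T := by
  have hpm : p < maximalIdeal T :=
    (le_maximalIdeal hp.ne_top).lt_of_ne fun h => hpmax (h ▸ maximalIdeal.isMaximal T)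
  have hk : 2 ≤ #(T ⧸ maximalIdeal T) := two_le_iff.mpr ⟨0, 1, zero_ne_one⟩
  have hpow : #(ℕ → T ⧸ maximalIdeal T) = #(T ⧸ maximalIdeal T) ^ ℵ₀ := by simp
  have hlower : #(ℕ → T ⧸ maximalIdeal T) ≤ #(T ⧸ p) := cardinalMk_nat_arrow_le_quotient hpm
  have hupper : #T ≤ #(ℕ → T ⧸ maximalIdeal T) := by
    rw [hpow, ← max_aleph0_power_aleph0 hk]
    exact cardinalMk_le_of_isHausdorff (maximalIdeal T)
  have hquot : #(T ⧸ p) ≤ #T := mk_le_of_surjective Ideal.Quotient.mk_surjective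
  refine ⟨hquot.antisymm (hupper.trans hlower), ?_⟩
  calc (2 : Cardinal) ^ ℵ₀ ≤ #(T ⧸ maximalIdeal T) ^ ℵ₀ := power_le_power_right hk
    _ = #(ℕ → T ⧸ maximalIdeal T) := hpow.symm
    _ ≤ #T := hlower.trans hquot

/-- If `(T, m)` is a complete local (Noetherian) ring of Krull dimension at least one
and `p` is a nonmaximal prime ideal of `T`, then `|T/p| = |T| ≥ 2^ℵ₀`. -/
theorem card_quotient_eq_card {T : Type*} [CommRing T] [IsLocalRing T]
    [IsNoetherianRing T] [IsAdicComplete (maximalIdeal T) T]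
    (hdim : 1 ≤ ringKrullDim T)
    (p : Ideal T) (hp : p.IsPrime) (hpmax : ¬ p.IsMaximal) :
    #(T ⧸ p) = #T ∧ (2 : Cardinal) ^ Cardinal.aleph0 ≤ #T :=
  card_quotient_eq_card_general p hp hpmax
end

section
/- Let (T, m) be a complete local (Noetherian) ring, let D be a subset of T, let C be a subset of Spec T with m ∉ C, and let a be an ideal of T such that a is not contained in p for every p ∈ C. If C and D are countable, then a is not contained in the union over all t ∈ D and p ∈ C of the cosets t + p. -/
/-!
Give `T` its `m`-adic topology. It is complete, and every ideal `J` is closed because `T ⧸ J` is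
`m`-adically Hausdorff (Krull's intersection theorem); so `a` is a Baire space, in which each
coset `t + p` is closed. If countably many of them covered `a`, one would contain a neighbourhood
`a ∩ (x + mⁿ)` of some `x ∈ a`, whence `mⁿ ∩ a ⊆ p`, impossible for a prime `p ≠ m`
not containing `a`.
-/

open IsLocalRing Uniformity

namespace WithIdeal

variable {R : Type*} [CommRing R] [WithIdeal R]

theorem isAdic : IsAdic (i : Ideal R) := rfl

theorem baireSpace_of_isClosed [IsPrecomplete (i : Ideal R) R] {s : Set R} (hs : IsClosed s) :
    BaireSpace s := by
  have : CompleteSpace R := (IsAdic.isPrecomplete_iff isAdic).mp ‹_›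
  have : CompleteSpace s := hs.completeSpace_coe
  have := (isAdic (R := R)).hasBasis_nhds_zero.isCountablyGenerated
  have : (𝓤 R).IsCountablyGenerated := IsUniformAddGroup.uniformity_countably_generated
  infer_instance

theorem isClosed_ideal_of_isHausdorff (J : Ideal R) [IsHausdorff (i : Ideal R) (R ⧸ J)] :
    IsClosed (J : Set R) := by
  refine isClosed_of_closure_subset fun x hx => ?_
  rw [SetLike.mem_coe, ← Ideal.Quotient.eq_zero_iff_mem]
  refine IsHausdorff.haus ‹_› _ fun n => ?_
  obtain ⟨y, hxzJ, z, hz, rfl⟩ :=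
    (mem_closure_iff_nhds_basis (isAdic.hasBasis_nhds x)).mp hx n trivial
  have hmk : Ideal.Quotient.mk J x = (-z) • 1 := by
    rw [Algebra.smul_def, mul_one, ← sub_eq_zero, Ideal.Quotient.algebraMap_eq, ← map_sub,
      Ideal.Quotient.eq_zero_iff_mem, sub_neg_eq_add]
    exact hxzJ
  rw [SModEq.zero, hmk]
  exact Submodule.smul_mem_smul (neg_mem hz) Submodule.mem_top

theorem exists_pow_inf_le_of_nonempty_interior_coset {a p : Ideal R} {t : R}
    (h : (interior {x : (a : Set R) | (x : R) - t ∈ p}).Nonempty) : ∃ n, i ^ n ⊓ a ≤ p := by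
  obtain ⟨x, hx⟩ := h
  obtain ⟨u, hu, huS⟩ := mem_nhds_subtype _ _ _ |>.mp (mem_interior_iff_mem_nhds.mp hx)
  obtain ⟨n, -, hn⟩ := (isAdic.hasBasis_nhds (x : R)).mem_iff.mp hu
  refine ⟨n, fun z ⟨hzn, hza⟩ => ?_⟩
  have hxz : (x : R) + z - t ∈ p :=
    huS (a := ⟨x + z, a.add_mem x.2 hza⟩) (hn ⟨z, hzn, rfl⟩)
  have hx : (x : R) - t ∈ p := interior_subset (s := {x : (a : Set R) | (x : R) - t ∈ p}) hx
  simpa using p.sub_mem hxz hx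

end WithIdeal

/-- **Heitmann, Lemma 2** (countable prime avoidance for cosets). Let `(T, m)` be a
complete local (Noetherian) ring, `D ⊆ T`, `C` a set of prime ideals of `T` with
`m ∉ C`, and `a` an ideal of `T` not contained in any member of `C`. If `C` and `D`
are countable, then `a` is not contained in `⋃ {t + p | t ∈ D, p ∈ C}`. -/
theorem countable_coset_avoidance {T : Type*} [CommRing T] [IsLocalRing T]
    [IsNoetherianRing T] [IsAdicComplete (maximalIdeal T) T]
    (D : Set T) (C : Set (Ideal T)) (hCprime : ∀ p ∈ C, p.IsPrime)
    (hm : maximalIdeal T ∉ C)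
    (a : Ideal T) (ha : ∀ p ∈ C, ¬ a ≤ p)
    (hC : C.Countable) (hD : D.Countable) :
    ¬ (a : Set T) ⊆ ⋃ (t ∈ D) (p ∈ C), {x : T | x - t ∈ p} := by
  let _ : WithIdeal T := ⟨maximalIdeal T⟩
  have _ : IsPrecomplete (WithIdeal.i : Ideal T) T :=
    inferInstanceAs (IsPrecomplete (maximalIdeal T) T)
  have _ (J : Ideal T) : IsHausdorff (WithIdeal.i : Ideal T) (T ⧸ J) :=
    inferInstanceAs (IsHausdorff (maximalIdeal T) (T ⧸ J))
  intro hsub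
  have : BaireSpace (a : Set T) :=
    WithIdeal.baireSpace_of_isClosed (WithIdeal.isClosed_ideal_of_isHausdorff a)
  have : Countable (D ×ˢ C) := (hD.prod hC).to_subtype
  let coset (q : D ×ˢ C) : Set (a : Set T) := {x | (x : T) - q.1.1 ∈ q.1.2}
  have hclosed (q : D ×ˢ C) : IsClosed (coset q) :=
    (WithIdeal.isClosed_ideal_of_isHausdorff q.1.2).preimage
      (continuous_subtype_val.sub continuous_const)
  have hcover : ⋃ q, coset q = Set.univ := by
    refine Set.eq_univ_of_forall fun x => ?_
    obtain ⟨t, ht, p, hp, hx⟩ := by simpa only [Set.mem_iUnion] using hsub x.2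
    exact Set.mem_iUnion.mpr ⟨⟨(t, p), ht, hp⟩, hx⟩
  obtain ⟨⟨⟨t, p⟩, _, hp⟩, hinterior⟩ :=
    nonempty_interior_of_iUnion_of_closed hclosed hcover
  obtain ⟨n, hn⟩ := WithIdeal.exists_pow_inf_le_of_nonempty_interior_coset hinterior
  have hprime := hCprime p hp
  rcases hprime.inf_le.mp hn with hmp | hap
  · exact hm ((maximalIdeal.isMaximal T).eq_of_le hprime.ne_top (hprime.le_of_pow_le hmp) ▸ hp)
  · exact ha p hp hap
end

section
/- Let (T, m) be a local (Noetherian) ring, let D be a subset of T, let C be a subset of Spec T, and let a be an ideal of T such that a is not contained in p for every p ∈ C. If the cardinality of C × D is strictly less than the cardinality of T/m, then a is not contained in the union over all t ∈ D and p ∈ C of the cosets t + p. -/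
open IsLocalRing Cardinal

/-!
A finitely generated ideal `a = (x₁, …, xₙ)` is handled one generator at a time: given
`y ∈ (x₁, …, xₖ)` avoiding the cosets `t + p` with `(x₁, …, xₖ) ⊄ p`, look for `y + r xₖ₊₁`.
For a pair `(p, t)` with `xₖ₊₁ ∉ p`, primality of `p` confines the bad multipliers `r` to a single
coset of `p`, hence of `m ⊇ p`; there are fewer pairs than residue classes mod `m`, so some `r`
is good for all of them at once, while pairs with `xₖ₊₁ ∈ p` are already handled by `y`.
-/

universe u

lemma Ideal.IsPrime.sub_mem_of_add_mul_mem {T : Type*} [CommRing T] {p : Ideal T}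
    (hp : p.IsPrime) {x b r₁ r₂ : T} (hx : x ∉ p) (h₁ : b + r₁ * x ∈ p) (h₂ : b + r₂ * x ∈ p) :
    r₁ - r₂ ∈ p := by
  have hmul : (r₁ - r₂) * x ∈ p := by
    rw [show (r₁ - r₂) * x = (b + r₁ * x) - (b + r₂ * x) by ring]
    exact p.sub_mem h₁ h₂
  exact (hp.mem_or_mem hmul).resolve_right hx

lemma exists_forall_notMem_of_subsingleton_image {α : Type*} {ι Q : Type u} {f : α → Q}
    (hf : Function.Surjective f) {S : ι → Set α} (hS : ∀ i, (f '' S i).Subsingleton)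
    (hcard : #ι < #Q) : ∃ r, ∀ i, r ∉ S i := by
  have hunion : #(⋃ i, f '' S i) < #Q := by
    calc #(⋃ i, f '' S i) ≤ sum fun i => #(f '' S i) := mk_iUnion_le_sum_mk
      _ ≤ sum fun _ : ι => (1 : Cardinal) :=
          sum_le_sum _ _ fun i => mk_le_one_iff_set_subsingleton.2 (hS i)
      _ = #ι := by simp
      _ < #Q := hcard
  obtain ⟨q, hq⟩ : ∃ q, q ∉ ⋃ i, f '' S i := by
    by_contra! h
    rw [Set.eq_univ_of_forall h, mk_univ] at hunion
    exact hunion.false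
  obtain ⟨r, rfl⟩ := hf q
  exact ⟨r, fun i hr => hq (Set.mem_iUnion.2 ⟨i, Set.mem_image_of_mem f hr⟩)⟩

lemma exists_mem_span_forall_sub_notMem {T ι : Type u} [CommRing T] (m : Ideal T)
    (p : ι → Ideal T) (hp : ∀ i, (p i).IsPrime) (hpm : ∀ i, p i ≤ m) (t : ι → T)
    (hcard : #ι < #(T ⧸ m)) (s : Finset T) :
    ∃ z ∈ Ideal.span (s : Set T), ∀ i, ¬ Ideal.span (s : Set T) ≤ p i → z - t i ∉ p i := by
  classical
  induction s using Finset.induction_on with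
  | empty => exact ⟨0, Ideal.zero_mem _, fun i hi => absurd (by simp) hi⟩
  | insert x s _ ih =>
    obtain ⟨y, hy, hyt⟩ := ih
    obtain ⟨r, hr⟩ := exists_forall_notMem_of_subsingleton_image (Ideal.Quotient.mk_surjective)
      (S := fun i => {r | x ∉ p i ∧ y - t i + r * x ∈ p i})
      (fun i _ ⟨r₁, ⟨hx, h₁⟩, e₁⟩ _ ⟨r₂, ⟨_, h₂⟩, e₂⟩ => by
        rw [← e₁, ← e₂, Ideal.Quotient.eq]
        exact hpm i ((hp i).sub_mem_of_add_mul_mem hx h₁ h₂))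
      hcard
    refine ⟨y + r * x, ?_, fun i hle hmem => ?_⟩
    · exact Ideal.add_mem _ (Ideal.span_mono (by simp) hy)
        (Ideal.mul_mem_left _ r (Ideal.subset_span (by simp)))
    rw [add_sub_right_comm] at hmem
    by_cases hx : x ∈ p i
    · refine hyt i (fun hs => hle ?_) (by simpa using (p i).sub_mem hmem ((p i).mul_mem_left r hx))
      rw [Finset.coe_insert, Ideal.span_insert]
      exact sup_le ((Ideal.span_singleton_le_iff_mem _).2 hx) hs
    · exact hr i ⟨hx, hmem⟩

/-- **Heitmann, Lemma 3** (cardinal prime avoidance for cosets). Let `(T, m)` be a local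
(Noetherian) ring, `D ⊆ T`, `C` a set of prime ideals of `T`, and `a` an ideal of `T`
not contained in any member of `C`. If `|C × D| < |T/m|`, then `a` is not contained in
`⋃ {t + p | t ∈ D, p ∈ C}`. -/
theorem coset_avoidance {T : Type*} [CommRing T] [IsLocalRing T] [IsNoetherianRing T]
    (D : Set T) (C : Set (Ideal T)) (hCprime : ∀ p ∈ C, p.IsPrime)
    (a : Ideal T) (ha : ∀ p ∈ C, ¬ a ≤ p)
    (hcard : #(C × D) < #(T ⧸ maximalIdeal T)) :
    ¬ (a : Set T) ⊆ ⋃ (t ∈ D) (p ∈ C), {x : T | x - t ∈ p} := by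
  intro hsub
  obtain ⟨s, rfl⟩ : a.FG := IsNoetherian.noetherian a
  obtain ⟨z, hz, hzt⟩ := exists_mem_span_forall_sub_notMem (maximalIdeal T)
    (fun i : C × D => (i.1 : Ideal T)) (fun i => hCprime _ i.1.2)
    (fun i => le_maximalIdeal (hCprime _ i.1.2).ne_top) (fun i => i.2) hcard s
  obtain ⟨t, ht, p, hp, hzp⟩ : ∃ t ∈ D, ∃ p ∈ C, z - t ∈ p := by simpa using hsub hz
  exact hzt (⟨p, hp⟩, ⟨t, ht⟩) (ha p hp) hzp
end

section
/- Let (T, m) be a complete local ring and let R₀ be a Z_d-subring of T with distinguished set Q_{R₀}. Let P be a nonmaximal prime ideal of T such that P ∩ R₀ = (0). Let Ω be a well-ordered set with least element 0, and assume either Ω is countable or, for all β ∈ Ω, |{γ ∈ Ω : γ < β}| < |T/m|. Suppose {R_β : β ∈ Ω} is an ascending collection of rings such that R_α ∩ P = (0) for every α ∈ Ω, such that if β is a limit ordinal then R_β = ∪_{γ<β} R_γ with Q_{R_β} = ∪_{γ<β} Q_{R_γ}, and such that if β = γ + 1 then R_β is an A₊-extension of R_γ. Then S = ∪_{β∈Ω}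 R_β satisfies all the conditions to be a Z_d-subring of T with distinguished set Q_S = ∪_{β∈Ω} Q_{R_β} except the cardinality condition, and instead |S| ≤ sup(ℵ₀, |R₀|, |Ω|). Furthermore, P ∩ S = (0), elements which are prime in some R_β remain prime in S, and Q_{R₀} ⊆ Q_S. -/
universe u

open IsLocalRing Cardinal

/-- The height of an ideal: infimum of heights of primes containing it. -/
noncomputable def idealHt {T : Type*} [CommRing T] (I : Ideal T) : ℕ∞ :=
  ⨅ (p : PrimeSpectrum T) (_ : I ≤ p.asIdeal), Order.height p

/-- `specHt T k` is the set of height-`k` prime ideals of `T`. -/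
def specHt (T : Type*) [CommRing T] (k : ℕ) : Set (Ideal T) :=
  {q | q.IsPrime ∧ idealHt q = (k : ℕ∞)}

/-- All the conditions of being a `Z_d`-subring of `T` with distinguished set `Q`
except the cardinality condition. -/
def ZdConditions {T : Type*} [CommRing T] [IsLocalRing T] (d : ℕ) (R : Subring T)
    (Q : Set (Ideal T)) : Prop :=
  -- `R` is quasi-local with maximal ideal `m ∩ R`
  (∀ x : R, IsUnit x ↔ (x : T) ∉ maximalIdeal T) ∧
  -- `R` is a unique factorization domain
  (∃ hdom : IsDomain R,
    UniqueFactorizationMonoid R) ∧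
  -- (ii) `q ∩ R = (0)` for all `q ∈ Ass T`
  (∀ q ∈ associatedPrimes T T, Ideal.comap R.subtype q = ⊥) ∧
  -- (iii) if `t` is regular and `q ∈ Ass (T/tT)` then `ht (q ∩ R) ≤ 1`
  (∀ t ∈ nonZeroDivisors T, ∀ q ∈ associatedPrimes T (T ⧸ Ideal.span {t}),
    idealHt (Ideal.comap R.subtype q) ≤ 1) ∧
  -- (iv) `Q ⊆ Spec_d T` and `q ↦ q ∩ R` is a bijection from `Q` onto `Spec_1 R`
  (Q ⊆ specHt T d ∧
    Set.BijOn (fun q => Ideal.comap R.subtype q) Q (specHt (↥R) 1))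

/-- `R` is a `Z_d`-subring of `T` with distinguished set `Q`. -/
def IsZdSubring {T : Type*} [CommRing T] [IsLocalRing T] (d : ℕ) (R : Subring T)
    (Q : Set (Ideal T)) : Prop :=
  ZdConditions d R Q ∧
  -- (i) `|R| ≤ sup(ℵ₀, |T/m|)`, with equality only if `T/m` is countable
  (#R ≤ max ℵ₀ #(ResidueField T) ∧
    (#R = max ℵ₀ #(ResidueField T) → #(ResidueField T) ≤ ℵ₀))

/-- `S` is an `A₊`-extension of `R` (both `Z_d`-subrings of `T`, with distinguished
sets `QR` and `QS`). -/
def IsAPlusExtension {T : Type*} [CommRing T] [IsLocalRing T] (d : ℕ) (R S : Subring T)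
    (QR QS : Set (Ideal T)) : Prop :=
  IsZdSubring d R QR ∧ IsZdSubring d S QS ∧
  ∃ hle : R ≤ S,
    -- (i) prime elements of `R` are prime in `S`
    (∀ r : R, Prime r → Prime (Subring.inclusion hle r)) ∧
    -- (ii) `|S| ≤ sup(ℵ₀, |R|)`
    #S ≤ max ℵ₀ #R ∧
    -- (iii) `QR ⊆ QS`
    QR ⊆ QS

/-- `depth T > 1`: there is a regular sequence of length two inside the maximal ideal. -/
def DepthGTOne (T : Type*) [CommRing T] [IsLocalRing T] : Prop :=
  ∃ x y : T, x ∈ maximalIdeal T ∧ y ∈ maximalIdeal T ∧ x ∈ nonZeroDivisors T ∧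
    Ideal.Quotient.mk (Ideal.span {x}) y ∈ nonZeroDivisors (T ⧸ Ideal.span {x})

/-- `T` is equidimensional: `dim (T/p) = dim T` for every minimal prime `p`. -/
def IsEquidim (T : Type*) [CommRing T] : Prop :=
  ∀ p ∈ minimalPrimes T, ringKrullDim (T ⧸ p) = ringKrullDim T

/-- `β` is the successor of `γ` in the well-ordered set `Ω`. -/
def IsSuccOf {Ω : Type*} [LinearOrder Ω] (β γ : Ω) : Prop :=
  γ < β ∧ ∀ δ : Ω, γ < δ → β ≤ δ

/-- `β` is a limit element: it is neither the least element nor a successor. -/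
def IsLimitElem {Ω : Type*} [LinearOrder Ω] [OrderBot Ω] (β : Ω) : Prop :=
  β ≠ ⊥ ∧ ¬ ∃ γ : Ω, IsSuccOf β γ

/-!
`S` is the directed union of the `R β`, and every condition on a `Z_d`-subring except the
cardinality bound has finite character: units, zero divisors, divisibility and chains of primes
in `S` are witnessed by finitely many elements, which lie in a single `R β`. Transfinite induction
shows that each `R β` satisfies these conditions and that primes of `R γ` stay prime in `R β` for
`γ ≤ β` (by the `A₊` condition at successors, by the same union argument at limits); then prime
factorizations in the `R β` are prime factorizations in `S`, so `S` is a UFD. A height-one prime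
of `S` is `(s)` for a prime `s`; then `s` is prime in any `R β` containing it, so
`s R β = q ∩ R β` for some `q ∈ Q_β`, and `q ∩ S = (s)`.
-/

lemma idealHt_eq_height {A : Type*} [CommRing A] (p : Ideal A) [hp : p.IsPrime] :
    idealHt p = p.height := by
  rw [show p.height = Order.height (⟨p, hp⟩ : PrimeSpectrum A) from
    PrimeSpectrum.height_eq_orderHeight ⟨p, hp⟩]
  apply le_antisymm
  · exact iInf₂_le (⟨p, hp⟩ : PrimeSpectrum A) le_rfl
  · exact le_iInf₂ fun q hq => Order.height_mono (show (⟨p, hp⟩ : PrimeSpectrum A) ≤ q from hq)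

namespace Ideal

variable {A : Type*} [CommRing A]

lemma height_le_one_iff_not_lt_lt (p : Ideal A) [p.IsPrime] :
    p.height ≤ 1 ↔ ∀ a b : Ideal A, a.IsPrime → b.IsPrime → a < b → ¬ b < p := by
  have height_lt_one_iff (q : Ideal A) [q.IsPrime] :
      q.height < 1 ↔ ∀ a : Ideal A, a.IsPrime → ¬ a < q := by
    rw [Order.lt_one_iff, ← nonpos_iff_eq_zero, ← Nat.cast_zero, height_le_iff]
    simp
  rw [← Nat.cast_one, height_le_iff]
  exact ⟨fun h a b ha hb hab hbp => (height_lt_one_iff b).mp (h b hb hbp) a ha hab,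
    fun h q hq hqp => (height_lt_one_iff q).mpr fun a ha haq => h a q ha hq haq hqp⟩

lemma comap_lt_comap_of_mem_of_notMem {B : Type*} [CommRing B] (f : A →+* B) {a b : Ideal B}
    (hab : a ≤ b) {x : A} (hxb : f x ∈ b) (hxa : f x ∉ a) : a.comap f < b.comap f :=
  lt_of_le_not_ge (comap_mono hab) fun h => hxa (h hxb)

variable [IsDomain A]

lemma one_le_height_of_ne_bot {p : Ideal A} [p.IsPrime] (hp : p ≠ ⊥) : 1 ≤ p.height :=
  Order.one_le_iff_pos.mpr (pos_iff_ne_zero.mpr (height_eq_zero_iff_eq_bot.not.mpr hp))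

lemma eq_of_le_of_height_le_one {p q : Ideal A} [p.IsPrime] [q.IsPrime] (hp : p ≠ ⊥)
    (hpq : p ≤ q) (hq : q.height ≤ 1) : p = q :=
  eq_of_le_of_not_lt hpq fun hlt => (height_le_one_iff_not_lt_lt q).mp hq ⊥ p isPrime_bot
    inferInstance (bot_lt_iff_ne_bot.mpr hp) hlt

lemma height_span_singleton_of_prime [UniqueFactorizationMonoid A] {x : A} (hx : Prime x) :
    (span {x}).height = 1 := by
  have : (span {x}).IsPrime := (span_singleton_prime hx.ne_zero).mpr hx
  refine le_antisymm ((height_le_one_iff_not_lt_lt _).mpr ?_)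
    (one_le_height_of_ne_bot (by simpa using hx.ne_zero))
  intro a b _ hb hab hbx
  -- a prime `y ∈ b` (which exists in a UFD) is divisible by `x`, hence associated to it
  obtain ⟨y, hyb, hy⟩ := hb.exists_mem_prime_of_ne_bot (ne_bot_of_gt hab)
  have hyx : y ∣ x := (hx.associated_of_dvd hy (mem_span_singleton.mp (hbx.le hyb))).symm.dvd
  exact hbx.not_ge ((span_singleton_le_iff_mem _).mpr (mem_of_dvd _ hyx hyb))

end Ideal

lemma mem_specHt_iff {A : Type*} [CommRing A] {k : ℕ} {p : Ideal A} :
    p ∈ specHt A k ↔ p.IsPrime ∧ p.height = k :=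
  ⟨fun ⟨hp, h⟩ => ⟨hp, (idealHt_eq_height p).symm.trans h⟩,
    fun ⟨hp, h⟩ => ⟨hp, (idealHt_eq_height p).trans h⟩⟩

lemma isLocalHom_subtype_iff {T : Type*} [CommRing T] [IsLocalRing T] {R : Subring T} :
    IsLocalHom R.subtype ↔ ∀ x : R, IsUnit x ↔ (x : T) ∉ maximalIdeal T := by
  simp only [notMem_maximalIdeal]
  exact ⟨fun _ x => ⟨IsUnit.map R.subtype, isUnit_of_map_unit R.subtype x⟩,
    fun h => ⟨fun x => (h x).mpr⟩⟩

lemma exists_prime_factors_map {A B : Type*} [CommRing A] [IsDomain A]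
    [UniqueFactorizationMonoid A] [CommRing B] (f : A →+* B) (hf : ∀ p, Prime p → Prime (f p))
    {a : A} (ha : a ≠ 0) : ∃ s : Multiset B, (∀ b ∈ s, Prime b) ∧ Associated s.prod (f a) := by
  obtain ⟨s, hs, hsa⟩ := UniqueFactorizationMonoid.exists_prime_factors a ha
  refine ⟨s.map f, fun b hb => ?_, by simpa [map_multiset_prod] using hsa.map f⟩
  obtain ⟨p, hp, rfl⟩ := Multiset.mem_map.mp hb
  exact hf p (hs p hp)

namespace Subring

variable {T : Type*} [CommRing T]

instance isLocalHom_inclusion {R S : Subring T} (h : R ≤ S) [IsLocalHom R.subtype] :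
    IsLocalHom (inclusion h) :=
  haveI : IsLocalHom (S.subtype.comp (inclusion h)) := ‹IsLocalHom R.subtype›
  isLocalHom_of_comp (inclusion h) S.subtype

section Union

variable {ι : Type*} {R : ι → Subring T} {S : Subring T} {Q : ι → Set (Ideal T)}
  {QS : Set (Ideal T)}

lemma mem_of_coe_eq_iUnion (hS : (S : Set T) = ⋃ i, (R i : Set T)) {x : T} :
    x ∈ S ↔ ∃ i, x ∈ R i := by
  rw [← SetLike.mem_coe, hS, Set.mem_iUnion]
  rfl

lemma le_of_coe_eq_iUnion (hS : (S : Set T) = ⋃ i, (R i : Set T)) (i : ι) : R i ≤ S :=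
  fun _ hx => (mem_of_coe_eq_iUnion hS).mpr ⟨i, hx⟩

lemma comap_subtype_eq_bot_of_coe_eq_iUnion (hS : (S : Set T) = ⋃ i, (R i : Set T))
    {q : Ideal T} (hq : ∀ i, q.comap (R i).subtype = ⊥) : q.comap S.subtype = ⊥ := by
  refine (Submodule.eq_bot_iff _).mpr fun x hx => ?_
  obtain ⟨i, hi⟩ := (mem_of_coe_eq_iUnion hS).mp x.2
  have : (⟨x, hi⟩ : R i) ∈ q.comap (R i).subtype := hx
  rw [hq i, Ideal.mem_bot] at this
  exact Subtype.ext (congrArg Subtype.val this :)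

lemma isLocalHom_subtype_of_coe_eq_iUnion (hS : (S : Set T) = ⋃ i, (R i : Set T))
    [∀ i, IsLocalHom (R i).subtype] : IsLocalHom S.subtype := by
  refine ⟨fun x hx => ?_⟩
  obtain ⟨i, hi⟩ := (mem_of_coe_eq_iUnion hS).mp x.2
  exact (isUnit_of_map_unit (R i).subtype ⟨x, hi⟩ hx).map (inclusion (le_of_coe_eq_iUnion hS i))

lemma uniqueFactorizationMonoid_of_coe_eq_iUnion [∀ i, IsDomain (R i)]
    [∀ i, UniqueFactorizationMonoid (R i)] [IsDomain S] (hS : (S : Set T) = ⋃ i, (R i : Set T))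
    (hprime : ∀ i (x : R i), Prime x → Prime (inclusion (le_of_coe_eq_iUnion hS i) x)) :
    UniqueFactorizationMonoid S := by
  refine .of_exists_prime_factors fun a ha => ?_
  obtain ⟨i, hi⟩ := (mem_of_coe_eq_iUnion hS).mp a.2
  exact exists_prime_factors_map _ (hprime i) (a := ⟨a, hi⟩)
    fun h => ha (Subtype.ext (congrArg Subtype.val h :))

lemma surjOn_comap_subtype_of_coe_eq_iUnion [∀ i, IsLocalHom (R i).subtype]
    [∀ i, IsDomain (R i)] [∀ i, UniqueFactorizationMonoid (R i)] [IsDomain S]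
    [UniqueFactorizationMonoid S] (hS : (S : Set T) = ⋃ i, (R i : Set T)) (hQS : QS = ⋃ i, Q i)
    (hsurj : ∀ i, Set.SurjOn (fun q => q.comap (R i).subtype) (Q i) (specHt (R i) 1))
    (hmaps : Set.MapsTo (fun q => q.comap S.subtype) QS (specHt S 1)) :
    Set.SurjOn (fun q => q.comap S.subtype) QS (specHt S 1) := by
  intro p hp
  obtain ⟨_, hp1⟩ := mem_specHt_iff.mp hp
  -- `p = (s)` with `s` prime in `S`; as `R i → S` reflects units, `s` is irreducible in `R i`
  obtain ⟨s, hsp, hs⟩ :=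
    ‹p.IsPrime›.exists_mem_prime_of_ne_bot (Ideal.ne_bot_of_height_eq_one hp1)
  obtain ⟨i, hi⟩ := (mem_of_coe_eq_iUnion hS).mp s.2
  have hs' : Prime (⟨s, hi⟩ : R i) := UniqueFactorizationMonoid.irreducible_iff_prime.mp
    (hs.irreducible.of_map (f := inclusion (le_of_coe_eq_iUnion hS i)))
  obtain ⟨q, hqi, hqs⟩ := hsurj i (mem_specHt_iff.mpr
    ⟨(Ideal.span_singleton_prime hs'.ne_zero).mpr hs', Ideal.height_span_singleton_of_prime hs'⟩)
  have hqS : q ∈ QS := hQS ▸ Set.mem_iUnion_of_mem i hqi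
  obtain ⟨_, hq1⟩ := mem_specHt_iff.mp (hmaps hqS)
  refine ⟨q, hqS,
    (Ideal.eq_of_le_of_height_le_one (Ideal.ne_bot_of_height_eq_one hp1) ?_ hq1.le).symm⟩
  rw [Ideal.eq_span_singleton_of_height_eq_one hp1 hsp hs, Ideal.span_singleton_le_iff_mem]
  have hsq : (⟨s, hi⟩ : R i) ∈ q.comap (R i).subtype :=
    (show q.comap (R i).subtype = _ from hqs) ▸ Ideal.mem_span_singleton_self _
  exact hsq

end Union

section DirectedUnion

variable {ι : Type*} [Preorder ι] [IsDirected ι (· ≤ ·)] {R : ι → Subring T} {S : Subring T}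
  {Q : ι → Set (Ideal T)} {QS : Set (Ideal T)} {d : ℕ}

lemma exists_ge_mem_of_coe_eq_iUnion (hR : Monotone R) (hS : (S : Set T) = ⋃ i, (R i : Set T))
    (i : ι) {x : T} (hx : x ∈ S) : ∃ j, i ≤ j ∧ x ∈ R j := by
  obtain ⟨k, hk⟩ := (mem_of_coe_eq_iUnion hS).mp hx
  obtain ⟨j, hij, hkj⟩ := directed_of (· ≤ ·) i k
  exact ⟨j, hij, hR hkj hk⟩

lemma isDomain_of_coe_eq_iUnion [Nonempty ι] [∀ i, IsDomain (R i)] (hR : Monotone R)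
    (hS : (S : Set T) = ⋃ i, (R i : Set T)) : IsDomain S := by
  let i : ι := Classical.arbitrary ι
  have : Nontrivial S := (inclusion_injective (le_of_coe_eq_iUnion hS i)).nontrivial
  refine @NoZeroDivisors.to_isDomain _ _ _ ⟨fun {a b} hab => ?_⟩
  obtain ⟨j, -, ha⟩ := exists_ge_mem_of_coe_eq_iUnion hR hS i a.2
  obtain ⟨k, hjk, hb⟩ := exists_ge_mem_of_coe_eq_iUnion hR hS j b.2
  have hab' : (⟨a, hR hjk ha⟩ * ⟨b, hb⟩ : R k) = 0 := Subtype.ext (congrArg Subtype.val hab :)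
  rcases mul_eq_zero.mp hab' with h | h
  · exact .inl (Subtype.ext (congrArg Subtype.val h :))
  · exact .inr (Subtype.ext (congrArg Subtype.val h :))

lemma prime_inclusion_of_coe_eq_iUnion (hR : Monotone R) (hS : (S : Set T) = ⋃ i, (R i : Set T))
    {i : ι} [IsLocalHom (R i).subtype] {x : R i} (hx : ∀ j (h : i ≤ j), Prime (inclusion (hR h) x))
    (hle : R i ≤ S) : Prime (inclusion hle x) := by
  refine ⟨fun h => (hx i le_rfl).ne_zero (Subtype.ext (congrArg Subtype.val h :)),
    fun h => (hx i le_rfl).not_isUnit (h.of_map _), fun a b ⟨c, habc⟩ => ?_⟩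
  obtain ⟨j, hij, ha⟩ := exists_ge_mem_of_coe_eq_iUnion hR hS i a.2
  obtain ⟨k, hjk, hb⟩ := exists_ge_mem_of_coe_eq_iUnion hR hS j b.2
  obtain ⟨l, hkl, hc⟩ := exists_ge_mem_of_coe_eq_iUnion hR hS k c.2
  have hil : i ≤ l := hij.trans (hjk.trans hkl)
  have hdvd : inclusion (hR hil) x ∣ ⟨a, hR (hjk.trans hkl) ha⟩ * ⟨b, hR hkl hb⟩ :=
    ⟨⟨c, hc⟩, Subtype.ext (congrArg Subtype.val habc :)⟩
  have hlS := le_of_coe_eq_iUnion hS l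
  exact ((hx l hil).dvd_or_dvd hdvd).imp (map_dvd (inclusion hlS)) (map_dvd (inclusion hlS))

lemma height_comap_subtype_le_one_of_coe_eq_iUnion (hR : Monotone R)
    (hS : (S : Set T) = ⋃ i, (R i : Set T)) {q : Ideal T} [q.IsPrime] (i : ι)
    (hq : ∀ j, i ≤ j → (q.comap (R j).subtype).height ≤ 1) : (q.comap S.subtype).height ≤ 1 := by
  refine (Ideal.height_le_one_iff_not_lt_lt _).mpr fun a b _ _ hab hbq => ?_
  -- a chain `a < b < q ∩ S` is witnessed by two elements, which already lie in some `R k`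
  obtain ⟨x, hxb, hxa⟩ := SetLike.exists_of_lt hab
  obtain ⟨y, hyq, hyb⟩ := SetLike.exists_of_lt hbq
  obtain ⟨j, hij, hx⟩ := exists_ge_mem_of_coe_eq_iUnion hR hS i x.2
  obtain ⟨k, hjk, hy⟩ := exists_ge_mem_of_coe_eq_iUnion hR hS j y.2
  let φ := inclusion (le_of_coe_eq_iUnion hS k)
  exact (Ideal.height_le_one_iff_not_lt_lt _).mp (hq k (hij.trans hjk)) (a.comap φ) (b.comap φ)
    inferInstance inferInstance
    (Ideal.comap_lt_comap_of_mem_of_notMem φ hab.le (x := ⟨x, hR hjk hx⟩) hxb hxa)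
    (Ideal.comap_lt_comap_of_mem_of_notMem φ hbq.le (x := ⟨y, hy⟩) hyq hyb)

lemma comap_subtype_mem_specHt_one_of_coe_eq_iUnion [IsDomain S] (hR : Monotone R)
    (hS : (S : Set T) = ⋃ i, (R i : Set T)) {q : Ideal T} [q.IsPrime] {i : ι}
    (hq : ∀ j, i ≤ j → q.comap (R j).subtype ∈ specHt (R j) 1) :
    q.comap S.subtype ∈ specHt S 1 := by
  obtain ⟨-, hqi⟩ := mem_specHt_iff.mp (hq i le_rfl)
  have : Nontrivial T := (Subtype.val_injective (p := (· ∈ S))).nontrivial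
  have hqi_ne : q.comap (R i).subtype ≠ ⊥ := fun h => by simp [h, Ideal.height_bot] at hqi
  obtain ⟨x, hxq, hx0⟩ := Submodule.exists_mem_ne_zero_of_ne_bot hqi_ne
  have hne : q.comap S.subtype ≠ ⊥ := fun h => hx0 <| Subtype.ext
    (congrArg Subtype.val ((Submodule.eq_bot_iff _).mp h ⟨x, le_of_coe_eq_iUnion hS i x.2⟩ hxq) :)
  refine mem_specHt_iff.mpr ⟨inferInstance, le_antisymm ?_ (Ideal.one_le_height_of_ne_bot hne)⟩
  exact height_comap_subtype_le_one_of_coe_eq_iUnion hR hS i fun j hij =>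
    (mem_specHt_iff.mp (hq j hij)).2.le

lemma injOn_comap_subtype_of_coe_eq_iUnion (hQ : Monotone Q)
    (hS : (S : Set T) = ⋃ i, (R i : Set T)) (hQS : QS = ⋃ i, Q i)
    (hinj : ∀ i, Set.InjOn (fun q => q.comap (R i).subtype) (Q i)) :
    Set.InjOn (fun q => q.comap S.subtype) QS := by
  intro q₁ hq₁ q₂ hq₂ heq
  rw [hQS, Set.mem_iUnion] at hq₁ hq₂
  obtain ⟨⟨i₁, hq₁⟩, ⟨i₂, hq₂⟩⟩ := And.intro hq₁ hq₂
  obtain ⟨j, hj₁, hj₂⟩ := directed_of (· ≤ ·) i₁ i₂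
  exact hinj j (hQ hj₁ hq₁) (hQ hj₂ hq₂)
    (congrArg (Ideal.comap (inclusion (le_of_coe_eq_iUnion hS j))) heq)

theorem zdConditions_of_coe_eq_iUnion [IsLocalRing T] [Nonempty ι] (hR : Monotone R)
    (hQ : Monotone Q) (hS : (S : Set T) = ⋃ i, (R i : Set T)) (hQS : QS = ⋃ i, Q i)
    (hzd : ∀ i, ZdConditions d (R i) (Q i))
    (hprime : ∀ i j (h : i ≤ j) (x : R i), Prime x → Prime (inclusion (hR h) x)) :
    ZdConditions d S QS := by
  choose hloc hufd hass hht hQd hmaps hinj hsurj using hzd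
  have (i : ι) : IsLocalHom (R i).subtype := isLocalHom_subtype_iff.mpr (hloc i)
  have (i : ι) : IsDomain (R i) := (hufd i).1
  have (i : ι) : UniqueFactorizationMonoid (R i) := (hufd i).2
  have : IsLocalHom S.subtype := isLocalHom_subtype_of_coe_eq_iUnion hS
  have : IsDomain S := isDomain_of_coe_eq_iUnion hR hS
  have : UniqueFactorizationMonoid S :=
    uniqueFactorizationMonoid_of_coe_eq_iUnion hS fun i x hx =>
      prime_inclusion_of_coe_eq_iUnion hR hS (fun j h => hprime i j h x hx) _
  have hmapsS : Set.MapsTo (fun q => q.comap S.subtype) QS (specHt S 1) := by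
    intro q hq
    obtain ⟨i, hqi⟩ := Set.mem_iUnion.mp (hQS ▸ hq)
    have : q.IsPrime := (hQd i hqi).1
    exact comap_subtype_mem_specHt_one_of_coe_eq_iUnion hR hS fun j hij => hmaps j (hQ hij hqi)
  refine ⟨isLocalHom_subtype_iff.mp ‹_›, ⟨‹_›, ‹_›⟩,
    fun q hq => comap_subtype_eq_bot_of_coe_eq_iUnion hS fun i => hass i q hq,
    fun t ht q hq => ?_, hQS ▸ Set.iUnion_subset hQd, hmapsS,
    injOn_comap_subtype_of_coe_eq_iUnion hQ hS hQS hinj,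
    surjOn_comap_subtype_of_coe_eq_iUnion hS hQS hsurj hmapsS⟩
  have : q.IsPrime := hq.isPrime
  rw [idealHt_eq_height]
  exact height_comap_subtype_le_one_of_coe_eq_iUnion hR hS (Classical.arbitrary ι) fun j _ =>
    (idealHt_eq_height _).symm.trans_le (hht j t ht q hq)

end DirectedUnion

end Subring

lemma Subring.mk_le_of_coe_eq_iUnion {T ι : Type u} [CommRing T] {R : ι → Subring T}
    {S : Subring T} (hS : (S : Set T) = ⋃ i, (R i : Set T)) {κ : Cardinal.{u}} (hκ : ℵ₀ ≤ κ)
    (hι : #ι ≤ κ) (hR : ∀ i, #(R i) ≤ κ) : #S ≤ κ :=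
  calc #S = #(⋃ i, (R i : Set T)) := by rw [← hS]; rfl
    _ ≤ #ι * ⨆ i, #(R i : Set T) := mk_iUnion_le _
    _ ≤ κ * κ := mul_le_mul' hι (ciSup_le' hR)
    _ = κ := mul_eq_self hκ

section WellOrder

variable {Ω : Type*} [LinearOrder Ω]

lemma IsSuccOf.le_of_lt {β γ δ : Ω} (h : IsSuccOf β γ) (hδ : δ < β) : δ ≤ γ :=
  not_lt.mp fun hγδ => (h.2 δ hγδ).not_gt hδ

variable [OrderBot Ω] [WellFoundedLT Ω]

theorem induction_bot_succ_limit {motive : Ω → Prop} (bot : motive ⊥)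
    (succ : ∀ β γ, IsSuccOf β γ → motive γ → motive β)
    (limit : ∀ β, IsLimitElem β → (∀ γ < β, motive γ) → motive β) (β : Ω) : motive β := by
  induction β using WellFoundedLT.induction with
  | ind β ih =>
    by_cases hβ : β = ⊥
    · exact hβ ▸ bot
    by_cases hsucc : ∃ γ, IsSuccOf β γ
    · obtain ⟨γ, hγ⟩ := hsucc
      exact succ β γ hγ (ih γ hγ.1)
    · exact limit β ⟨hβ, hsucc⟩ ih

lemma monotone_of_succ_of_limit {α : Type*} [Preorder α] {f : Ω → α}
    (hsucc : ∀ β γ, IsSuccOf β γ → f γ ≤ f β)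
    (hlim : ∀ β, IsLimitElem β → ∀ γ < β, f γ ≤ f β) : Monotone f := by
  refine monotone_iff_forall_lt.mpr fun γ β hγβ => ?_
  induction β using induction_bot_succ_limit with
  | bot => exact absurd hγβ not_lt_bot
  | succ β δ hβ ih =>
    rcases (hβ.le_of_lt hγβ).lt_or_eq with hγδ | rfl
    · exact (ih hγδ).trans (hsucc β δ hβ)
    · exact hsucc β γ hβ
  | limit β hβ _ => exact hlim β hβ γ hγβ

end WellOrder

lemma mk_le_of_chain {T Ω : Type u} [CommRing T] [LinearOrder Ω] [WellFoundedLT Ω]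
    [OrderBot Ω] {R : Ω → Subring T} (hsucc : ∀ β γ, IsSuccOf β γ → #(R β) ≤ max ℵ₀ #(R γ))
    (hlim : ∀ β, IsLimitElem β → (R β : Set T) = ⋃ γ ∈ Set.Iio β, (R γ : Set T))
    (β : Ω) : #(R β) ≤ max (max ℵ₀ #(R ⊥)) #Ω := by
  have hℵ₀ : ℵ₀ ≤ max (max ℵ₀ #(R ⊥)) #Ω := le_max_of_le_left (le_max_left _ _)
  induction β using induction_bot_succ_limit with
  | bot => exact le_max_of_le_left (le_max_right _ _)
  | succ β γ hβ ih =>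
    exact (hsucc β γ hβ).trans (max_le hℵ₀ ih)
  | limit β hβ ih =>
    refine Subring.mk_le_of_coe_eq_iUnion (ι := Set.Iio β)
      (by rw [hlim β hβ, Set.biUnion_eq_iUnion]) hℵ₀ ((mk_subtype_le _).trans (le_max_right _ _)) fun γ => ih γ γ.2

namespace IsAPlusExtension

variable {T : Type*} [CommRing T] [IsLocalRing T] {d : ℕ} {R S : Subring T}
  {QR QS : Set (Ideal T)}

lemma zdConditions (h : IsAPlusExtension d R S QR QS) : ZdConditions d S QS :=
  h.2.1.1

lemma prime_inclusion (h : IsAPlusExtension d R S QR QS) (hle : R ≤ S) {r : R} (hr : Prime r) :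
    Prime (Subring.inclusion hle r) :=
  h.2.2.elim fun _ h => h.1 r hr

lemma card_le (h : IsAPlusExtension d R S QR QS) : #S ≤ max ℵ₀ #R :=
  h.2.2.elim fun _ h => h.2.1

lemma subset (h : IsAPlusExtension d R S QR QS) : QR ⊆ QS :=
  h.2.2.elim fun _ h => h.2.2

end IsAPlusExtension

section Chain

variable {T Ω : Type u} [CommRing T] [IsLocalRing T] [LinearOrder Ω] [WellFoundedLT Ω]
  [OrderBot Ω] {d : ℕ} {R : Ω → Subring T} {Q : Ω → Set (Ideal T)}

lemma zdConditions_and_prime_inclusion_of_chain (hR : Monotone R) (hQ : Monotone Q)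
    (h0 : ZdConditions d (R ⊥) (Q ⊥))
    (hsucc : ∀ β γ, IsSuccOf β γ → IsAPlusExtension d (R γ) (R β) (Q γ) (Q β))
    (hlim : ∀ β, IsLimitElem β →
      (R β : Set T) = ⋃ γ ∈ Set.Iio β, (R γ : Set T) ∧ Q β = ⋃ γ ∈ Set.Iio β, Q γ)
    (β : Ω) : ZdConditions d (R β) (Q β) ∧
      ∀ γ (h : γ ≤ β) (x : R γ), Prime x → Prime (Subring.inclusion (hR h) x) := by
  induction β using induction_bot_succ_limit with
  | bot =>
    refine ⟨h0, fun γ h x hx => ?_⟩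
    obtain rfl := le_bot_iff.mp h
    exact hx
  | succ β γ hβ ih =>
    refine ⟨(hsucc β γ hβ).zdConditions, fun δ hδ x hx => ?_⟩
    rcases hδ.lt_or_eq with hδβ | rfl
    · exact (hsucc β γ hβ).prime_inclusion (hR hβ.1.le) (ih.2 δ (hβ.le_of_lt hδβ) x hx)
    · exact hx
  | limit β hβ ih =>
    obtain ⟨hRβ, hQβ⟩ := hlim β hβ
    have : Nonempty (Set.Iio β) := ⟨⟨⊥, bot_lt_iff_ne_bot.mpr hβ.1⟩⟩
    have hR' : Monotone fun γ : Set.Iio β => R γ := hR.comp (Subtype.mono_coe _)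
    have hQ' : Monotone fun γ : Set.Iio β => Q γ := hQ.comp (Subtype.mono_coe _)
    have hS : (R β : Set T) = ⋃ γ : Set.Iio β, (R γ : Set T) := by rw [hRβ, Set.biUnion_eq_iUnion]
    refine ⟨Subring.zdConditions_of_coe_eq_iUnion hR' hQ' hS (by rw [hQβ, Set.biUnion_eq_iUnion])
      (fun γ => (ih γ γ.2).1) (fun γ δ h => (ih δ δ.2).2 γ h), fun γ hγ x hx => ?_⟩
    rcases hγ.lt_or_eq with hγβ | rfl
    · have := isLocalHom_subtype_iff.mpr (ih γ hγβ).1.1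
      exact Subring.prime_inclusion_of_coe_eq_iUnion hR' hS (i := ⟨γ, hγβ⟩)
        (fun δ h => (ih δ δ.2).2 γ h x hx) _
    · exact hx

end Chain

theorem zd_union_general {T : Type u} [CommRing T] [IsLocalRing T] (d : ℕ)
    (Ω : Type u) [LinearOrder Ω] [WellFoundedLT Ω] [OrderBot Ω]
    (R : Ω → Subring T) (Q : Ω → Set (Ideal T))
    (hR0 : IsZdSubring d (R ⊥) (Q ⊥))
    (P : Ideal T)
    (hasc : Monotone R)
    (hP' : ∀ α : Ω, Ideal.comap (R α).subtype P = ⊥)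
    (hlim : ∀ β : Ω, IsLimitElem β →
      ((R β : Set T) = ⋃ γ ∈ Set.Iio β, ((R γ : Set T))) ∧
      Q β = ⋃ γ ∈ Set.Iio β, Q γ)
    (hsucc : ∀ β γ : Ω, IsSuccOf β γ → IsAPlusExtension d (R γ) (R β) (Q γ) (Q β))
    (S : Subring T) (hS : (S : Set T) = ⋃ β : Ω, ((R β : Set T)))
    (QS : Set (Ideal T)) (hQS : QS = ⋃ β : Ω, Q β) :
    ZdConditions d S QS ∧
    #S ≤ max (max ℵ₀ #(R ⊥)) #Ω ∧
    Ideal.comap S.subtype P = ⊥ ∧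
    (∀ (β : Ω) (x : R β), Prime x → ∀ hle : R β ≤ S, Prime (Subring.inclusion hle x)) ∧
    Q ⊥ ⊆ QS := by
  have : Nonempty Ω := ⟨⊥⟩
  have hQ : Monotone Q := monotone_of_succ_of_limit (fun β γ h => (hsucc β γ h).subset)
    (fun β hβ γ hγ => (hlim β hβ).2 ▸ Set.subset_biUnion_of_mem (u := Q) hγ)
  have hchain := zdConditions_and_prime_inclusion_of_chain hasc hQ hR0.1 hsucc hlim
  refine ⟨Subring.zdConditions_of_coe_eq_iUnion hasc hQ hS hQS (fun β => (hchain β).1)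
      fun β γ h => (hchain γ).2 β h,
    Subring.mk_le_of_coe_eq_iUnion hS (le_max_of_le_left (le_max_left _ _)) (le_max_right _ _)
      (mk_le_of_chain (fun β γ h => (hsucc β γ h).card_le) fun β hβ => (hlim β hβ).1),
    Subring.comap_subtype_eq_bot_of_coe_eq_iUnion hS hP',
    fun β x hx hle => ?_, hQS ▸ Set.subset_iUnion Q ⊥⟩
  have := isLocalHom_subtype_iff.mpr (hchain β).1.1
  exact Subring.prime_inclusion_of_coe_eq_iUnion hasc hS (fun γ h => (hchain γ).2 β h x hx) hle

theorem zd_union {T : Type u} [CommRing T] [IsLocalRing T] [IsNoetherianRing T]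
    [IsAdicComplete (maximalIdeal T) T] (d : ℕ)
    (Ω : Type u) [LinearOrder Ω] [WellFoundedLT Ω] [OrderBot Ω]
    (hΩ : Countable Ω ∨ ∀ β : Ω, #{γ : Ω // γ < β} < #(ResidueField T))
    (R : Ω → Subring T) (Q : Ω → Set (Ideal T))
    (hR0 : IsZdSubring d (R ⊥) (Q ⊥))
    (P : Ideal T) (hP : P.IsPrime) (hPmax : ¬ P.IsMaximal)
    (hPR0 : Ideal.comap (R ⊥).subtype P = ⊥)
    (hasc : Monotone R)
    (hP' : ∀ α : Ω, Ideal.comap (R α).subtype P = ⊥)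
    (hlim : ∀ β : Ω, IsLimitElem β →
      ((R β : Set T) = ⋃ γ ∈ Set.Iio β, ((R γ : Set T))) ∧
      Q β = ⋃ γ ∈ Set.Iio β, Q γ)
    (hsucc : ∀ β γ : Ω, IsSuccOf β γ → IsAPlusExtension d (R γ) (R β) (Q γ) (Q β))
    (S : Subring T) (hS : (S : Set T) = ⋃ β : Ω, ((R β : Set T)))
    (QS : Set (Ideal T)) (hQS : QS = ⋃ β : Ω, Q β) :
    ZdConditions d S QS ∧
    #S ≤ max (max ℵ₀ #(R ⊥)) #Ω ∧
    Ideal.comap S.subtype P = ⊥ ∧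
    (∀ (β : Ω) (x : R β), Prime x → ∀ hle : R β ≤ S, Prime (Subring.inclusion hle x)) ∧
    Q ⊥ ⊆ QS :=
  zd_union_general d Ω R Q hR0 P hasc hP' hlim hsucc S hS QS hQS
end

section
/- Let T be a commutative ring with a subring R, let y ∈ T, and let p be a prime ideal of T such that the image of y in T/p is transcendental over the image of R in T/(p ∩ R) (viewed inside T/p). Then p ∩ R[y] = (p ∩ R)·R[y], where R[y] is the subring of T generated by R and y. -/
/-! An element of `p ∩ R[y]` is `f(y)` for some `f ∈ R[X]`; then `f` annihilates `y + p`, so by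
transcendence all coefficients of `f` lie in `p ∩ R`, which puts `f(y)` in `(p ∩ R)·R[y]`. -/

open Polynomial

theorem Polynomial.eval₂_mem_map_of_coeff_mem {R S : Type*} [CommRing R] [CommRing S]
    (φ : R →+* S) (s : S) {I : Ideal R} {f : R[X]} (hf : ∀ n, f.coeff n ∈ I) :
    f.eval₂ φ s ∈ I.map φ := by
  have hmap : (I.map C).map (eval₂RingHom φ s) = I.map φ := by
    rw [Ideal.map_map, eval₂RingHom_comp_C]
  exact hmap ▸ Ideal.mem_map_of_mem (eval₂RingHom φ s) (Ideal.mem_map_C_iff.mpr hf)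

theorem Subring.closure_union_singleton_eq_range_aeval {T : Type*} [CommRing T]
    (R : Subring T) (y : T) :
    Subring.closure ((R : Set T) ∪ {y}) = (aeval (R := R) y).range.toSubring := by
  rw [← Algebra.adjoin_singleton_eq_range_aeval, Algebra.adjoin_eq_ring_closure]
  exact congrArg (fun s ↦ Subring.closure (s ∪ {y})) Subtype.range_coe.symm

theorem comap_adjoin_eq_map_comap_general {T : Type*} [CommRing T] (R : Subring T) (y : T)
    (p : Ideal T)
    (htrans : ∀ f : Polynomial R,
      Polynomial.aeval (Ideal.Quotient.mk p y) f = 0 → ∀ n : ℕ, ((f.coeff n : T) ∈ p)) :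
    ∀ hle : R ≤ Subring.closure ((R : Set T) ∪ {y}),
      Ideal.comap (Subring.closure ((R : Set T) ∪ {y})).subtype p =
        Ideal.map (Subring.inclusion hle) (Ideal.comap R.subtype p) := by
  intro hle
  refine le_antisymm ?_ (Ideal.map_le_iff_le_comap.mpr fun _ hr ↦ hr)
  rintro ⟨x, hxS⟩ (hxp : x ∈ p)
  obtain ⟨f, rfl⟩ : ∃ f : R[X], aeval y f = x := by
    rwa [Subring.closure_union_singleton_eq_range_aeval] at hxS
  have hcoeff : ∀ n, f.coeff n ∈ Ideal.comap R.subtype p := by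
    refine htrans f ?_
    rwa [← Ideal.Quotient.mkₐ_eq_mk R, aeval_algHom_apply, Ideal.Quotient.mkₐ_eq_mk,
      Ideal.Quotient.eq_zero_iff_mem]
  have hx : (⟨aeval y f, hxS⟩ : Subring.closure ((R : Set T) ∪ {y})) =
      f.eval₂ (Subring.inclusion hle) ⟨y, Subring.mem_closure_of_mem (Or.inr rfl)⟩ :=
    Subtype.ext <| by
      change aeval y f = (Subring.closure ((R : Set T) ∪ {y})).subtype _
      rw [hom_eval₂]
      rfl
  rw [hx]
  exact eval₂_mem_map_of_coeff_mem _ _ hcoeff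

/-- Let `T` be a commutative ring with subring `R`, let `y ∈ T`, and let `p` be a prime
ideal of `T` such that the image of `y` in `T/p` is transcendental over the image of `R`
(that is, any polynomial over `R` annihilating `y + p` has all of its coefficients in
`p`). Then `p ∩ R[y] = (p ∩ R)·R[y]`, where `R[y]` is the subring of `T` generated by
`R` and `y`. -/
theorem comap_adjoin_eq_map_comap {T : Type*} [CommRing T] (R : Subring T) (y : T)
    (p : Ideal T) (hp : p.IsPrime)
    (htrans : ∀ f : Polynomial R,
      Polynomial.aeval (Ideal.Quotient.mk p y) f = 0 → ∀ n : ℕ, ((f.coeff n : T) ∈ p)) :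
    ∀ hle : R ≤ Subring.closure ((R : Set T) ∪ {y}),
      Ideal.comap (Subring.closure ((R : Set T) ∪ {y})).subtype p =
        Ideal.map (Subring.inclusion hle) (Ideal.comap R.subtype p) :=
  comap_adjoin_eq_map_comap_general R y p htrans
end
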